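/- Let R be a Noetherian supercommutative superring and M a finitely generated R-supermodule. Then there exists a filtration by R-subsupermodules 0 = M₀ ⊂ M₁ ⊂ ⋯ ⊂ M_d = M such that each quotient Mᵢ/Mᵢ₋₁ is isomorphic to R/𝔭ᵢ or to Π(R/𝔭ᵢ) (the parity swap) for some prime ideal 𝔭ᵢ of R. Moreover 𝔞𝔰𝔰(M) ⊆ {𝔭₁, …, 𝔭_d}; in particular 𝔞𝔰𝔰(M) is finite. -/

import Mathlib

open DirectSum

/-- A `ZMod 2`-grading on a ring is supercommutative if homogeneous elements satisfy the
sign rule `x * y = (-1)^(|x||y|) * (y * x)`. -/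
def SuperCommutative {R : Type*} [Ring R] (𝒜 : ZMod 2 → AddSubgroup R) : Prop :=
  ∀ (i j : ZMod 2) (x y : R), x ∈ 𝒜 i → y ∈ 𝒜 j →
    x * y = ((-1 : ℤ) ^ (i.val * j.val)) • (y * x)

/-- `2` is a non-zerodivisor in `R`. -/
def TwoRegular (R : Type*) [Ring R] : Prop := ∀ x : R, 2 * x = 0 → x = 0

/-- A two-sided ideal is a superideal if it is graded, i.e. it contains the homogeneous
components of each of its elements. -/
def IsSuperIdeal {R : Type*} [Ring R] (𝒜 : ZMod 2 → AddSubgroup R) [GradedRing 𝒜]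
    (I : TwoSidedIdeal R) : Prop :=
  ∀ x ∈ I, ∀ i, (DirectSum.decompose 𝒜 x i : R) ∈ I

/-- An ideal of a superring is prime if the quotient ring is an integral domain. -/
def IsPrimeSuperIdeal {R : Type*} [Ring R] (I : TwoSidedIdeal R) : Prop :=
  IsDomain I.ringCon.Quotient

/-- An ideal of a superring is maximal if the quotient ring is a field. -/
def IsMaximalSuperIdeal {R : Type*} [Ring R] (I : TwoSidedIdeal R) : Prop :=
  IsField I.ringCon.Quotient

/-- A superring is Noetherian if it satisfies the ascending chain condition on superideals. -/
def SuperNoetherian {R : Type*} [Ring R] (𝒜 : ZMod 2 → AddSubgroup R) [GradedRing 𝒜] : Prop :=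
  ∀ f : ℕ →o TwoSidedIdeal R, (∀ n, IsSuperIdeal 𝒜 (f n)) → ∃ n, ∀ m, n ≤ m → f m = f n

/-- The action of a graded ring on a graded module is compatible with the gradings. -/
def GradedSMul {R : Type*} [Ring R] (𝒜 : ZMod 2 → AddSubgroup R)
    {M : Type*} [AddCommGroup M] [Module R M] (ℳ : ZMod 2 → AddSubgroup M) : Prop :=
  ∀ (i j : ZMod 2) (r : R) (m : M), r ∈ 𝒜 i → m ∈ ℳ j → r • m ∈ ℳ (i + j)

/-!
Homogeneous submodules of `M` satisfy the ascending chain condition: for `N` homogeneous and `x`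
homogeneous, a homogeneous `A ≤ N + Rx` is determined by `A ∩ N` and by the colon ideal
`(A + N : x)`, which is homogeneous and therefore two-sided by supercommutativity.

Given a homogeneous `N ≠ M`, choose a homogeneous `x ∉ N` whose colon ideal `(N : x)` is maximal.
If `uv ∈ (N : x)` with `u, v` homogeneous and `v ∉ (N : x)`, then `(N : x) ≤ (N : vx)`, so by
maximality `u ∈ (N : vx) = (N : x)`. Odd elements square to zero because `2` is regular, so they
all lie in `(N : x)`, and primality reduces to even parts. Then `(N + Rx)/N ≅ R/(N : x)`, with the
parity shifted by that of `x`; thus a maximal homogeneous submodule with a prime filtration is `M`.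

If `𝔭 = Ann(m)` is prime, let `i` be the step at which `Rm` first meets the filtration. A nonzero
`z ∈ Rm ∩ Mᵢ₊₁` has annihilator `𝔭` and maps to a nonzero element of `Mᵢ₊₁/Mᵢ ≅ R/𝔭ᵢ` whose
annihilator is `𝔭ᵢ`.
-/

theorem exists_maximal_of_chains_stabilize {α : Type*} [PartialOrder α] {p q : α → Prop}
    (hp : ∀ f : ℕ →o α, (∀ n, p (f n)) → ∃ n, ∀ m, n ≤ m → f m = f n)
    (hqp : ∀ a, q a → p a) (hq : ∃ a, q a) : ∃ a, Maximal q a := by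
  have : WellFoundedGT {a // p a} := wellFoundedGT_iff_monotone_chain_condition.2 fun f => by
    obtain ⟨n, hn⟩ := hp ((OrderHom.Subtype.val p).comp f) (fun n => (f n).2)
    exact ⟨n, fun m hm => Subtype.ext (hn m hm).symm⟩
  obtain ⟨a, ha⟩ := hq
  obtain ⟨b, hb⟩ := exists_maximal_of_wellFoundedGT (fun b : {a // p a} => q b) ⟨⟨a, hqp a ha⟩, ha⟩
  exact ⟨b, hb.1, fun c hc hbc => hb.2 (y := ⟨c, hqp c hc⟩) hc hbc⟩

theorem Fin.exists_not_castSucc_and_succ {d : ℕ} {p : Fin (d + 1) → Prop} (h0 : ¬ p 0)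
    (hlast : p (Fin.last d)) : ∃ i : Fin d, ¬ p i.castSucc ∧ p i.succ := by
  induction d with
  | zero => exact absurd hlast h0
  | succ d ih =>
    by_cases hd : p (Fin.last d).castSucc
    · obtain ⟨i, hi⟩ := ih (p := fun i => p i.castSucc) h0 hd
      exact ⟨i.castSucc, hi⟩
    · exact ⟨Fin.last d, hd, hlast⟩

theorem decompose_zero_add_decompose_one {M : Type*} [AddCommGroup M]
    (ℳ : ZMod 2 → AddSubgroup M) [Decomposition ℳ] (x : M) :
    (decompose ℳ x 0 : M) + decompose ℳ x 1 = x := by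
  classical
  conv_rhs => rw [← (decompose ℳ).symm_apply_apply x, ← DirectSum.sum_univ_of (decompose ℳ x)]
  rw [decompose_symm_sum]
  simp_rw [decompose_symm_of]
  exact (Fin.sum_univ_two (fun i : Fin 2 => (decompose ℳ x i : M))).symm

section Module

variable {R : Type*} [Ring R] {M : Type*} [AddCommGroup M] [Module R M]

open Submodule

theorem exists_sup_span_singleton_quotient_equiv (N : Submodule R M) (x : M) {I : Ideal R}
    (hI : ∀ r, r ∈ I ↔ r • x ∈ N) :
    ∃ e : (↥(N ⊔ span R {x}) ⧸ N.comap (N ⊔ span R {x}).subtype) ≃ₗ[R] R ⧸ I,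
      ∀ r (hr : r • x ∈ N ⊔ span R {x}),
        e (Submodule.Quotient.mk ⟨r • x, hr⟩) = Submodule.Quotient.mk r := by
  have hx : x ∈ N ⊔ span R {x} := mem_sup_right (mem_span_singleton_self x)
  let φ : R →ₗ[R] ↥(N ⊔ span R {x}) ⧸ N.comap (N ⊔ span R {x}).subtype :=
    (mkQ _).comp (LinearMap.toSpanSingleton R _ ⟨x, hx⟩)
  have hφ : ∀ r hr, φ r = Submodule.Quotient.mk ⟨r • x, hr⟩ := fun _ _ => rfl
  have hker : I = LinearMap.ker φ := by
    ext r
    rw [LinearMap.mem_ker, hφ r (smul_mem _ r hx), Submodule.Quotient.mk_eq_zero, hI]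
    rfl
  have hsurj : Function.Surjective φ := by
    rintro ⟨y, hy⟩
    obtain ⟨w, hw, z, hz, rfl⟩ := mem_sup.1 hy
    obtain ⟨r, rfl⟩ := mem_span_singleton.1 hz
    refine ⟨r, (hφ r (smul_mem _ r hx)).trans (Submodule.Quotient.eq _ |>.2 ?_)⟩
    simpa [mem_comap] using N.neg_mem hw
  refine ⟨((quotEquivOfEq _ _ hker).trans (φ.quotKerEquivOfSurjective hsurj)).symm,
    fun r hr => ?_⟩
  rw [LinearEquiv.symm_apply_eq, ← hφ r hr]
  rfl

theorem sup_span_singleton_le_of_colon_le {A B N : Submodule R M} {x : M}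
    (hB : B ≤ N ⊔ span R {x}) (h : (B ⊔ N).colon {x} ≤ (A ⊔ N).colon {x}) :
    B ⊔ N ≤ A ⊔ N := by
  refine sup_le (fun y hy => ?_) le_sup_right
  obtain ⟨w, hw, z, hz, rfl⟩ := mem_sup.1 (hB hy)
  obtain ⟨r, rfl⟩ := mem_span_singleton.1 hz
  have hr : r • x ∈ (B ⊔ N) := by
    simpa using sub_mem (mem_sup_left hy) (mem_sup_right hw : w ∈ B ⊔ N)
  exact add_mem (mem_sup_right hw) (mem_colon_singleton.1 (h (mem_colon_singleton.2 hr)))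

theorem Ideal.IsPrime.smul_eq_zero_iff {P : Ideal R} [P.IsTwoSided] (hP : P.IsPrime)
    {q : R ⧸ P} (hq : q ≠ 0) (r : R) : r • q = 0 ↔ r ∈ P := by
  obtain ⟨t, rfl⟩ := Submodule.Quotient.mk_surjective P q
  rw [Ne, Submodule.Quotient.mk_eq_zero] at hq
  rw [← Submodule.Quotient.mk_smul, Submodule.Quotient.mk_eq_zero, smul_eq_mul]
  exact ⟨fun h => (hP.mem_or_mem h).resolve_right hq, fun h => P.mul_mem_right t h⟩

theorem Ideal.IsPrime.mem_iff_smul_smul_eq_zero {𝔭 : Ideal R} [𝔭.IsTwoSided] (h𝔭 : 𝔭.IsPrime)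
    {m : M} (hm : ∀ r, r ∈ 𝔭 ↔ r • m = 0) {s : R} (hs : s • m ≠ 0) (r : R) :
    r ∈ 𝔭 ↔ r • s • m = 0 := by
  have hs' : s ∉ 𝔭 := fun h => hs ((hm s).1 h)
  rw [← mul_smul, ← hm]
  exact ⟨fun h => 𝔭.mul_mem_right s h, fun h => (h𝔭.mem_or_mem h).resolve_right hs'⟩

theorem exists_eq_of_forall_mem_iff_smul_eq_zero {d : ℕ} {Ms : Fin (d + 1) → Submodule R M}
    {𝔭s : Fin d → TwoSidedIdeal R} (h0 : Ms 0 = ⊥) (hlast : Ms (Fin.last d) = ⊤)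
    (hprime : ∀ i, (𝔭s i).asIdeal.IsPrime)
    (hiso : ∀ i, Nonempty ((↥(Ms i.succ) ⧸ (Ms i.castSucc).comap (Ms i.succ).subtype) ≃ₗ[R]
      R ⧸ (𝔭s i).asIdeal))
    {𝔭 : TwoSidedIdeal R} (h𝔭 : 𝔭.asIdeal.IsPrime) {m : M} (hm0 : m ≠ 0)
    (hm : ∀ r, r ∈ 𝔭 ↔ r • m = 0) : ∃ i, 𝔭 = 𝔭s i := by
  obtain ⟨i, hi, hi'⟩ := Fin.exists_not_castSucc_and_succ (p := fun k => span R {m} ⊓ Ms k ≠ ⊥)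
    (by simp [h0]) (by simpa [hlast] using hm0)
  rw [not_not] at hi
  obtain ⟨z, ⟨hzm, hzi⟩, hz0⟩ := (Submodule.ne_bot_iff _).1 hi'
  obtain ⟨s, rfl⟩ := mem_span_singleton.1 hzm
  obtain ⟨e⟩ := hiso i
  let q : ↥(Ms i.succ) ⧸ (Ms i.castSucc).comap (Ms i.succ).subtype :=
    Submodule.Quotient.mk ⟨s • m, hzi⟩
  have hq (r : R) : r • q = 0 ↔ r • s • m = 0 := by
    rw [← Submodule.Quotient.mk_smul, Submodule.Quotient.mk_eq_zero, mem_comap]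
    change r • s • m ∈ Ms i.castSucc ↔ r • s • m = 0
    exact ⟨fun h => (mem_bot R).1 (hi ▸ ⟨smul_mem _ r hzm, h⟩), fun h => h ▸ zero_mem _⟩
  have heq0 : e q ≠ 0 := by
    rw [Ne, LinearEquiv.map_eq_zero_iff, ← one_smul R q, hq, one_smul]
    exact hz0
  refine ⟨i, TwoSidedIdeal.ext fun r => ?_⟩
  rw [← TwoSidedIdeal.mem_asIdeal, ← TwoSidedIdeal.mem_asIdeal (I := 𝔭s i),
    h𝔭.mem_iff_smul_smul_eq_zero (by simpa using hm) hz0, ← hq,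
    ← (hprime i).smul_eq_zero_iff heq0, ← map_smul, LinearEquiv.map_eq_zero_iff]

end Module

section Superring

variable {R : Type*} [Ring R] {𝒜 : ZMod 2 → AddSubgroup R}

theorem mul_self_eq_zero_of_mem_odd (hsc : SuperCommutative 𝒜) (h2 : TwoRegular R) {u : R}
    (hu : u ∈ 𝒜 1) : u * u = 0 := by
  refine h2 _ ?_
  have h := hsc 1 1 u u hu hu
  rw [show ((1 : ZMod 2)).val = 1 from rfl, mul_one, pow_one, neg_one_zsmul] at h
  rw [two_mul]
  nth_rewrite 2 [h]
  exact add_neg_cancel _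

theorem isPrimeSuperIdeal_iff (P : TwoSidedIdeal R) :
    IsPrimeSuperIdeal P ↔ P.asIdeal.IsPrime := by
  have e : P.ringCon = Ideal.Quotient.ringCon P.asIdeal := RingCon.ext fun x y => by
    rw [TwoSidedIdeal.rel_iff]
    exact (Submodule.quotientRel_def (p := P.asIdeal)).symm
  unfold IsPrimeSuperIdeal
  rw [e]
  exact Ideal.Quotient.isDomain_iff_prime _

variable [GradedRing 𝒜]

theorem Ideal.IsHomogeneous.isTwoSided (hsc : SuperCommutative 𝒜) {I : Ideal R}
    (hI : I.IsHomogeneous 𝒜) : I.IsTwoSided where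
  mul_mem_of_left {a} b ha := by
    classical
    induction b using DirectSum.Decomposition.inductionOn 𝒜 with
    | zero => simp
    | add b b' hb hb' => rw [mul_add]; exact I.add_mem hb hb'
    | @homogeneous j b =>
      rw [← sum_support_decompose 𝒜 a, Finset.sum_mul]
      refine I.sum_mem fun i _ => ?_
      rw [hsc i j _ _ (decompose 𝒜 a i).2 b.2]
      exact zsmul_mem (I.mul_mem_left _ (hI i ha)) _

theorem isSuperIdeal_toTwoSided {I : Ideal R} [I.IsTwoSided] (hI : I.IsHomogeneous 𝒜) :
    IsSuperIdeal 𝒜 I.toTwoSided := fun x hx i => by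
  rw [Ideal.mem_toTwoSided] at hx ⊢
  exact hI i hx

theorem SuperNoetherian.homogeneous_ideal_chain_stabilizes (hsc : SuperCommutative 𝒜)
    (hN : SuperNoetherian 𝒜) (f : ℕ →o Ideal R) (hf : ∀ n, (f n).IsHomogeneous 𝒜) :
    ∃ n, ∀ m, n ≤ m → f m = f n := by
  have (n : ℕ) := (hf n).isTwoSided hsc
  obtain ⟨n, hn⟩ := hN ⟨fun n => (f n).toTwoSided, fun a b hab r hr => by
      simpa using f.mono hab (by simpa using hr)⟩ fun n => isSuperIdeal_toTwoSided (hf n)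
  refine ⟨n, fun m hm => ?_⟩
  have h : (f m).toTwoSided.asIdeal = (f n).toTwoSided.asIdeal := congrArg _ (hn m hm)
  rwa [Ideal.asIdeal_toTwoSided, Ideal.asIdeal_toTwoSided] at h

theorem Ideal.isPrime_of_homogeneous_mul_mem (hsc : SuperCommutative 𝒜) (h2 : TwoRegular R)
    {P : Ideal R} [P.IsTwoSided] (hne : P ≠ ⊤)
    (hmem : ∀ i j (u v : R), u ∈ 𝒜 i → v ∈ 𝒜 j → u * v ∈ P → u ∈ P ∨ v ∈ P) : P.IsPrime := by
  have hodd : ∀ u ∈ 𝒜 1, u ∈ P := fun u hu =>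
    (hmem 1 1 u u hu hu (by rw [mul_self_eq_zero_of_mem_odd hsc h2 hu]; exact P.zero_mem)).elim
      id id
  have hsub : ∀ a : R, a - decompose 𝒜 a 0 ∈ P := fun a => by
    rw [← eq_sub_of_add_eq' (decompose_zero_add_decompose_one 𝒜 a)]
    exact hodd _ (decompose 𝒜 a 1).2
  refine ⟨hne, fun {a b} hab => ?_⟩
  have h00 : (decompose 𝒜 a 0 : R) * decompose 𝒜 b 0 ∈ P := by
    have : (decompose 𝒜 a 0 : R) * decompose 𝒜 b 0 =
        a * b - (a - decompose 𝒜 a 0) * b - decompose 𝒜 a 0 * (b - decompose 𝒜 b 0) := by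
      noncomm_ring
    rw [this]
    exact P.sub_mem (P.sub_mem hab (P.mul_mem_right _ (hsub a))) (P.mul_mem_left _ (hsub b))
  refine (hmem 0 0 _ _ (decompose 𝒜 a 0).2 (decompose 𝒜 b 0).2 h00).imp (fun h => ?_) (fun h => ?_)
  · simpa using P.add_mem (hsub a) h
  · simpa using P.add_mem (hsub b) h

end Superring

section Supermodule

variable {R : Type*} [Ring R] {𝒜 : ZMod 2 → AddSubgroup R} [GradedRing 𝒜]
  {M : Type*} [AddCommGroup M] [Module R M] {ℳ : ZMod 2 → AddSubgroup M} [Decomposition ℳ]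

open Submodule

theorem decompose_smul_of_mem (hact : GradedSMul 𝒜 ℳ) {x : M} {ε : ZMod 2} (hx : x ∈ ℳ ε)
    (r : R) (i : ZMod 2) : (decompose ℳ (r • x) (i + ε) : M) = (decompose 𝒜 r i : R) • x := by
  induction r using DirectSum.Decomposition.inductionOn 𝒜 with
  | zero => simp
  | @homogeneous j r =>
    by_cases h : i = j
    · subst h
      rw [decompose_of_mem_same ℳ (hact i ε r x r.2 hx), decompose_of_mem_same 𝒜 r.2]
    · rw [decompose_of_mem_ne ℳ (hact j ε r x r.2 hx) (fun h' => h (add_right_cancel h').symm),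
        decompose_of_mem_ne 𝒜 r.2 (Ne.symm h), zero_smul]
  | add a b ha hb =>
    simp only [add_smul, decompose_add, DirectSum.add_apply, AddSubgroup.coe_add, ha, hb]

variable (ℳ) in
theorem Submodule.isHomogeneous_bot : (⊥ : Submodule R M).IsHomogeneous ℳ := fun j x hx => by
  rw [mem_bot] at hx ⊢
  simp [hx]

theorem Submodule.IsHomogeneous.sup {N P : Submodule R M} (hN : N.IsHomogeneous ℳ)
    (hP : P.IsHomogeneous ℳ) : (N ⊔ P).IsHomogeneous ℳ := fun j x hx => by
  obtain ⟨y, hy, z, hz, rfl⟩ := mem_sup.1 hx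
  rw [decompose_add, DirectSum.add_apply, AddSubgroup.coe_add]
  exact add_mem_sup (hN j hy) (hP j hz)

theorem Submodule.IsHomogeneous.inf {N P : Submodule R M} (hN : N.IsHomogeneous ℳ)
    (hP : P.IsHomogeneous ℳ) : (N ⊓ P).IsHomogeneous ℳ := fun j _ hx => ⟨hN j hx.1, hP j hx.2⟩

theorem Submodule.isHomogeneous_span_singleton (hact : GradedSMul 𝒜 ℳ) {x : M} {ε : ZMod 2}
    (hx : x ∈ ℳ ε) : (span R {x}).IsHomogeneous ℳ := fun j y hy => by
  obtain ⟨r, rfl⟩ := mem_span_singleton.1 hy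
  rw [← sub_add_cancel j ε, decompose_smul_of_mem hact hx]
  exact smul_mem _ _ (mem_span_singleton_self x)

theorem Submodule.IsHomogeneous.colon_singleton (hact : GradedSMul 𝒜 ℳ) {N : Submodule R M}
    (hN : N.IsHomogeneous ℳ) {x : M} {ε : ZMod 2} (hx : x ∈ ℳ ε) :
    (N.colon {x}).IsHomogeneous 𝒜 := fun i r hr => by
  rw [mem_colon_singleton] at hr ⊢
  rw [← decompose_smul_of_mem hact hx]
  exact hN _ hr

theorem Submodule.exists_homogeneous_notMem {N : Submodule R M} (hN : N ≠ ⊤) :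
    ∃ x ε, x ∈ ℳ ε ∧ x ∉ N := by
  obtain ⟨y, hy⟩ : ∃ y, y ∉ N := by simpa [eq_top_iff'] using hN
  by_contra! h
  rw [← decompose_zero_add_decompose_one ℳ y] at hy
  exact hy (N.add_mem (h _ 0 (decompose ℳ y 0).2) (h _ 1 (decompose ℳ y 1).2))

variable (R ℳ) in
theorem exists_finset_homogeneous_span_eq_top [Module.Finite R M] :
    ∃ s : Finset M, (∀ x ∈ s, ∃ ε, x ∈ ℳ ε) ∧ span R (s : Set M) = ⊤ := by
  classical
  obtain ⟨S, hS⟩ := Module.Finite.fg_top (R := R) (M := M)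
  refine ⟨(S ×ˢ Finset.univ).image fun p => (decompose ℳ p.1 p.2 : M), ?_, ?_⟩
  · simp only [Finset.mem_image]
    rintro _ ⟨p, -, rfl⟩
    exact ⟨p.2, (decompose ℳ p.1 p.2).2⟩
  · rw [eq_top_iff, ← hS, span_le]
    intro y hy
    rw [SetLike.mem_coe, ← decompose_zero_add_decompose_one ℳ y]
    refine add_mem (subset_span ?_) (subset_span ?_) <;>
      exact Finset.mem_image.2 ⟨(y, _), Finset.mem_product.2 ⟨hy, Finset.mem_univ _⟩, rfl⟩

theorem exists_homogeneous_sub_smul_mem (hact : GradedSMul 𝒜 ℳ) {N : Submodule R M}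
    (hN : N.IsHomogeneous ℳ) {x : M} {ε : ZMod 2} (hx : x ∈ ℳ ε) {y : M}
    (hy : y ∈ N ⊔ span R {x}) {j : ZMod 2} (hyj : y ∈ ℳ j) :
    ∃ r ∈ 𝒜 (j + ε), y - r • x ∈ N := by
  obtain ⟨w, hw, z, hz, rfl⟩ := mem_sup.1 hy
  obtain ⟨s, rfl⟩ := mem_span_singleton.1 hz
  refine ⟨decompose 𝒜 s (j + ε), (decompose 𝒜 s (j + ε)).2, ?_⟩
  have hcomp : w + s • x = decompose ℳ w j + (decompose 𝒜 s (j + ε) : R) • x := by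
    rw [← decompose_smul_of_mem hact hx, add_assoc, CharTwo.add_self_eq_zero, add_zero, ←
      AddSubgroup.coe_add, ← DirectSum.add_apply, ← decompose_add, decompose_of_mem_same ℳ hyj]
  rw [hcomp, add_sub_cancel_right]
  exact hN j hw

variable (𝒜 ℳ) in
/-- `B / A ≅ R/𝔭` or `B / A ≅ Π(R/𝔭)`: `e` sends homogeneous elements to classes of homogeneous
elements of the same, resp. the opposite, parity. -/
def SubquotientIsoQuotient (A B : Submodule R M) (𝔭 : TwoSidedIdeal R) : Prop :=
  ∃ e : (↥B ⧸ A.comap B.subtype) ≃ₗ[R] R ⧸ 𝔭.asIdeal,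
    (∀ (j : ZMod 2) (x : M) (hx : x ∈ B), x ∈ ℳ j →
        ∃ r ∈ 𝒜 j, e (Submodule.Quotient.mk ⟨x, hx⟩) = Submodule.Quotient.mk r) ∨
    (∀ (j : ZMod 2) (x : M) (hx : x ∈ B), x ∈ ℳ j →
        ∃ r ∈ 𝒜 (j + 1), e (Submodule.Quotient.mk ⟨x, hx⟩) = Submodule.Quotient.mk r)

theorem subquotientIsoQuotient_sup_span_singleton (hact : GradedSMul 𝒜 ℳ) {N : Submodule R M}
    (hN : N.IsHomogeneous ℳ) {x : M} {ε : ZMod 2} (hx : x ∈ ℳ ε) {𝔭 : TwoSidedIdeal R}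
    (h𝔭 : ∀ r, r ∈ 𝔭 ↔ r • x ∈ N) : SubquotientIsoQuotient 𝒜 ℳ N (N ⊔ span R {x}) 𝔭 := by
  obtain ⟨e, he⟩ := exists_sup_span_singleton_quotient_equiv N x (I := 𝔭.asIdeal)
    (by simpa using h𝔭)
  have hx' : x ∈ N ⊔ span R {x} := mem_sup_right (mem_span_singleton_self x)
  have key : ∀ (j : ZMod 2) (y : M) (hy : y ∈ N ⊔ span R {x}), y ∈ ℳ j →
      ∃ r ∈ 𝒜 (j + ε), e (Submodule.Quotient.mk ⟨y, hy⟩) = Submodule.Quotient.mk r := by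
    intro j y hy hyj
    obtain ⟨r, hr, hyr⟩ := exists_homogeneous_sub_smul_mem hact hN hx hy hyj
    refine ⟨r, hr, ?_⟩
    rw [← he r (smul_mem _ r hx')]
    congr 1
    exact (Submodule.Quotient.eq _).2 hyr
  refine ⟨e, ?_⟩
  obtain rfl | rfl : ε = 0 ∨ ε = 1 := (by decide : ∀ a : ZMod 2, a = 0 ∨ a = 1) ε
  · exact Or.inl (by simpa only [add_zero] using key)
  · exact Or.inr key

variable (𝒜 ℳ) in
def HasPrimeFiltration (N : Submodule R M) : Prop :=
  ∃ (d : ℕ) (Ms : Fin (d + 1) → Submodule R M) (𝔭s : Fin d → TwoSidedIdeal R),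
    Ms 0 = ⊥ ∧ Ms (Fin.last d) = N ∧ (∀ i : Fin d, Ms i.castSucc < Ms i.succ) ∧
    (∀ k, (Ms k).IsHomogeneous ℳ) ∧
    (∀ i, IsPrimeSuperIdeal (𝔭s i) ∧ IsSuperIdeal 𝒜 (𝔭s i)) ∧
    ∀ i, SubquotientIsoQuotient 𝒜 ℳ (Ms i.castSucc) (Ms i.succ) (𝔭s i)

theorem hasPrimeFiltration_bot : HasPrimeFiltration 𝒜 ℳ (⊥ : Submodule R M) :=
  ⟨0, fun _ => ⊥, Fin.elim0, rfl, rfl, Fin.elim0, fun _ => isHomogeneous_bot ℳ,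
    fun i => i.elim0, fun i => i.elim0⟩

theorem HasPrimeFiltration.sup_span_singleton (hact : GradedSMul 𝒜 ℳ) {N : Submodule R M}
    (hN : N.IsHomogeneous ℳ) (hNf : HasPrimeFiltration 𝒜 ℳ N) {x : M} {ε : ZMod 2}
    (hx : x ∈ ℳ ε) (hxN : x ∉ N) {𝔭 : TwoSidedIdeal R} (h𝔭 : IsPrimeSuperIdeal 𝔭)
    (h𝔭s : IsSuperIdeal 𝒜 𝔭) (h𝔭x : ∀ r, r ∈ 𝔭 ↔ r • x ∈ N) :
    HasPrimeFiltration 𝒜 ℳ (N ⊔ span R {x}) := by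
  obtain ⟨d, Ms, 𝔭s, h0, hlast, hlt, hhom, hprime, hiso⟩ := hNf
  refine ⟨d + 1, Fin.snoc Ms (N ⊔ span R {x}), Fin.snoc 𝔭s 𝔭, ?_, Fin.snoc_last _ _, ?_, ?_, ?_,
    ?_⟩
  · rw [← Fin.castSucc_zero, Fin.snoc_castSucc, h0]
  · refine Fin.lastCases ?_ (fun i => ?_)
    · rw [Fin.succ_last, Fin.snoc_last, Fin.snoc_castSucc, hlast]
      exact left_lt_sup.2 fun h => hxN (h (mem_span_singleton_self x))
    · simpa only [Fin.succ_castSucc, Fin.snoc_castSucc] using hlt i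
  · refine Fin.lastCases ?_ (fun k => ?_)
    · simpa only [Fin.snoc_last] using hN.sup (isHomogeneous_span_singleton hact hx)
    · simpa only [Fin.snoc_castSucc] using hhom k
  · refine Fin.lastCases ?_ (fun i => ?_)
    · simpa only [Fin.snoc_last] using ⟨h𝔭, h𝔭s⟩
    · simpa only [Fin.snoc_castSucc] using hprime i
  · refine Fin.lastCases ?_ (fun i => ?_)
    · simpa only [Fin.succ_last, Fin.snoc_last, Fin.snoc_castSucc, hlast] using
        subquotientIsoQuotient_sup_span_singleton hact hN hx h𝔭x
    · simpa only [Fin.succ_castSucc, Fin.snoc_castSucc] using hiso i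

variable (ℳ) in
def HomogeneousChainsStabilizeBelow (N : Submodule R M) : Prop :=
  ∀ f : ℕ →o Submodule R M, (∀ n, (f n).IsHomogeneous ℳ) → (∀ n, f n ≤ N) →
    ∃ n, ∀ m, n ≤ m → f m = f n

theorem homogeneousChainsStabilizeBelow_bot :
    HomogeneousChainsStabilizeBelow ℳ (⊥ : Submodule R M) :=
  fun _ _ hf => ⟨0, fun m _ => (le_bot_iff.1 (hf m)).trans (le_bot_iff.1 (hf 0)).symm⟩

theorem HomogeneousChainsStabilizeBelow.sup_span_singleton (hsc : SuperCommutative 𝒜)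
    (hNoeth : SuperNoetherian 𝒜) (hact : GradedSMul 𝒜 ℳ) {N : Submodule R M}
    (hN : N.IsHomogeneous ℳ) (hNc : HomogeneousChainsStabilizeBelow ℳ N) {x : M} {ε : ZMod 2}
    (hx : x ∈ ℳ ε) : HomogeneousChainsStabilizeBelow ℳ (N ⊔ span R {x}) := by
  intro f hf hfle
  obtain ⟨n₁, hn₁⟩ := hNc ⟨fun n => f n ⊓ N, fun a b hab => inf_le_inf_right N (f.mono hab)⟩
    (fun n => (hf n).inf hN) (fun n => inf_le_right)
  obtain ⟨n₂, hn₂⟩ := hNoeth.homogeneous_ideal_chain_stabilizes hsc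
    ⟨fun n => (f n ⊔ N).colon {x}, fun a b hab => colon_mono (sup_le_sup_right (f.mono hab) N)
      le_rfl⟩ (fun n => ((hf n).sup hN).colon_singleton hact hx)
  refine ⟨max n₁ n₂, fun m hm => (eq_of_le_of_inf_le_of_sup_le (z := N) (f.mono hm) ?_ ?_).symm⟩
  · exact (hn₁ m (le_of_max_le_left hm)).trans (hn₁ _ (le_max_left _ _)).symm |>.le
  · refine sup_span_singleton_le_of_colon_le (hfle m) ?_
    exact ((hn₂ m (le_of_max_le_right hm)).trans (hn₂ _ (le_max_right _ _)).symm).le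

theorem homogeneousChainsStabilizeBelow_top [Module.Finite R M] (hsc : SuperCommutative 𝒜)
    (hNoeth : SuperNoetherian 𝒜) (hact : GradedSMul 𝒜 ℳ) :
    HomogeneousChainsStabilizeBelow ℳ (⊤ : Submodule R M) := by
  classical
  obtain ⟨s, hs, hspan⟩ := exists_finset_homogeneous_span_eq_top R ℳ
  rw [← hspan]
  clear hspan
  suffices (span R (s : Set M)).IsHomogeneous ℳ ∧ HomogeneousChainsStabilizeBelow ℳ (span R s) from
    this.2
  induction s using Finset.induction_on with
  | empty => simpa using ⟨isHomogeneous_bot ℳ, homogeneousChainsStabilizeBelow_bot⟩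
  | insert x s _ ih =>
    obtain ⟨ε, hx⟩ := hs x (Finset.mem_insert_self x s)
    obtain ⟨hN, hNc⟩ := ih fun y hy => hs y (Finset.mem_insert_of_mem hy)
    rw [Finset.coe_insert, span_insert, sup_comm]
    exact ⟨hN.sup (isHomogeneous_span_singleton hact hx),
      hNc.sup_span_singleton hsc hNoeth hact hN hx⟩

theorem exists_homogeneous_isPrime_colon (hsc : SuperCommutative 𝒜) (h2 : TwoRegular R)
    (hNoeth : SuperNoetherian 𝒜) (hact : GradedSMul 𝒜 ℳ) {N : Submodule R M}
    (hN : N.IsHomogeneous ℳ) (hNtop : N ≠ ⊤) :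
    ∃ x ε, x ∈ ℳ ε ∧ x ∉ N ∧ (N.colon {x}).IsPrime := by
  let IsColon (I : Ideal R) : Prop := ∃ x ε, x ∈ ℳ ε ∧ x ∉ N ∧ N.colon {x} = I
  obtain ⟨_, hmax⟩ := exists_maximal_of_chains_stabilize (q := IsColon)
    (hNoeth.homogeneous_ideal_chain_stabilizes hsc)
    (by rintro _ ⟨x, ε, hx, -, rfl⟩; exact hN.colon_singleton hact hx)
    (by
      obtain ⟨x, ε, hx, hxN⟩ := exists_homogeneous_notMem (ℳ := ℳ) hNtop
      exact ⟨_, x, ε, hx, hxN, rfl⟩)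
  obtain ⟨x, ε, hx, hxN, rfl⟩ := hmax.1
  have := (hN.colon_singleton hact hx).isTwoSided hsc
  refine ⟨x, ε, hx, hxN, Ideal.isPrime_of_homogeneous_mul_mem hsc h2 ?_ fun i j u v hu hv huv => ?_⟩
  · rwa [Ne, Ideal.eq_top_iff_one, mem_colon_singleton, one_smul]
  · by_cases hvx : v • x ∈ N
    · exact Or.inr (mem_colon_singleton.2 hvx)
    refine Or.inl ?_
    have hle : N.colon {x} ≤ N.colon {v • x} := fun r hr => by
      simpa [mul_smul] using (N.colon {x}).mul_mem_right v hr
    rw [hmax.eq_of_le ⟨v • x, j + ε, hact j ε v x hv hx, hvx, rfl⟩ hle]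
    simpa [mul_smul] using huv

theorem hasPrimeFiltration_top [Module.Finite R M] (hsc : SuperCommutative 𝒜)
    (h2 : TwoRegular R) (hNoeth : SuperNoetherian 𝒜) (hact : GradedSMul 𝒜 ℳ) :
    HasPrimeFiltration 𝒜 ℳ (⊤ : Submodule R M) := by
  obtain ⟨N, hmax⟩ := exists_maximal_of_chains_stabilize
    (q := fun N : Submodule R M => N.IsHomogeneous ℳ ∧ HasPrimeFiltration 𝒜 ℳ N)
    (fun f hf => homogeneousChainsStabilizeBelow_top hsc hNoeth hact f hf fun _ => le_top)
    (fun _ => And.left) ⟨⊥, isHomogeneous_bot ℳ, hasPrimeFiltration_bot⟩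
  obtain ⟨hN, hNf⟩ := hmax.1
  by_contra hNtop
  obtain ⟨x, ε, hx, hxN, hprime⟩ := exists_homogeneous_isPrime_colon hsc h2 hNoeth hact hN
    fun h => hNtop (h ▸ hNf)
  have := (hN.colon_singleton hact hx).isTwoSided hsc
  have hext := hNf.sup_span_singleton hact hN hx hxN (𝔭 := (N.colon {x}).toTwoSided)
    ((isPrimeSuperIdeal_iff _).2 (by simpa)) (isSuperIdeal_toTwoSided (hN.colon_singleton hact hx))
    (by simp)
  have hNeq := hmax.eq_of_le ⟨hN.sup (isHomogeneous_span_singleton hact hx), hext⟩ le_sup_left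
  exact hxN (hNeq ▸ mem_sup_right (mem_span_singleton_self x))

end Supermodule

/-- Over a Noetherian superring, every finitely generated supermodule `M` admits a filtration
`0 = M₀ ⊂ M₁ ⊂ ⋯ ⊂ M_d = M` by graded submodules whose successive quotients are isomorphic
to `R/𝔭ᵢ` or `Π(R/𝔭ᵢ)` for prime ideals `𝔭ᵢ`; moreover every associated prime of `M` is one
of the `𝔭ᵢ`, so `𝔞𝔰𝔰(M)` is finite. -/
theorem exists_prime_filtration {R : Type*} [Ring R]
    (𝒜 : ZMod 2 → AddSubgroup R) [GradedRing 𝒜]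
    (hsc : SuperCommutative 𝒜) (h2 : TwoRegular R) (hN : SuperNoetherian 𝒜)
    (M : Type*) [AddCommGroup M] [Module R M] (ℳ : ZMod 2 → AddSubgroup M)
    [DirectSum.Decomposition ℳ] (hact : GradedSMul 𝒜 ℳ) [Module.Finite R M] :
    ∃ (d : ℕ) (Ms : Fin (d + 1) → Submodule R M) (𝔭s : Fin d → TwoSidedIdeal R),
      Ms 0 = ⊥ ∧ Ms (Fin.last d) = ⊤ ∧
      (∀ i : Fin d, Ms i.castSucc < Ms i.succ) ∧
      (∀ (k : Fin (d + 1)), ∀ m ∈ Ms k, ∀ j, (DirectSum.decompose ℳ m j : M) ∈ Ms k) ∧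
      (∀ i : Fin d, IsPrimeSuperIdeal (𝔭s i) ∧ IsSuperIdeal 𝒜 (𝔭s i)) ∧
      (∀ i : Fin d,
        ∃ e : (↥(Ms i.succ) ⧸ ((Ms i.castSucc).comap (Ms i.succ).subtype)) ≃ₗ[R]
            (R ⧸ (TwoSidedIdeal.asIdeal (𝔭s i) : Ideal R)),
          (∀ (j : ZMod 2) (x : M) (hx : x ∈ Ms i.succ), x ∈ ℳ j →
              ∃ r ∈ 𝒜 j, e (Submodule.Quotient.mk ⟨x, hx⟩) = Submodule.Quotient.mk r) ∨
          (∀ (j : ZMod 2) (x : M) (hx : x ∈ Ms i.succ), x ∈ ℳ j →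
              ∃ r ∈ 𝒜 (j + 1), e (Submodule.Quotient.mk ⟨x, hx⟩) = Submodule.Quotient.mk r)) ∧
      (∀ 𝔭 : TwoSidedIdeal R, IsPrimeSuperIdeal 𝔭 →
        (∃ m : M, m ≠ 0 ∧ (∃ i, m ∈ ℳ i) ∧ ∀ r : R, r ∈ 𝔭 ↔ r • m = 0) →
        ∃ i : Fin d, 𝔭 = 𝔭s i) := by
  obtain ⟨d, Ms, 𝔭s, h0, hlast, hlt, hhom, hprime, hiso⟩ :=
    hasPrimeFiltration_top (M := M) hsc h2 hN hact
  refine ⟨d, Ms, 𝔭s, h0, hlast, hlt, fun k m hm j => hhom k j hm, hprime, hiso, ?_⟩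
  rintro 𝔭 h𝔭 ⟨m, hm0, -, hm⟩
  exact exists_eq_of_forall_mem_iff_smul_eq_zero h0 hlast
    (fun i => (isPrimeSuperIdeal_iff _).1 (hprime i).1) (fun i => (hiso i).elim fun e _ => ⟨e⟩)
    ((isPrimeSuperIdeal_iff _).1 h𝔭) hm0 hm
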